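/- arXiv:2603.09198 — 2 statements merged into one kernel-verified Lean document; each statement's English description precedes it below -/
import Mathlib

section
/- Let H be a separable infinite-dimensional complex Hilbert space and let S ∈ B(H) satisfy [S, T] ∈ F(H) for every compact operator T ∈ K(H). Then [S, X] ∈ F(H) for every bounded operator X ∈ B(H); moreover, the ranks of all these commutators are bounded by a single uniform integer R. -/
/-! By Baire's theorem, one of the closed sets `{T compact : rank [S, T] ≤ n}`, which cover the
Banach space of compact operators, contains a ball; translating and rescaling it bounds
`rank [S, T]` by `2n` for every compact `T`. Rank at most `m` is preserved under pointwise
limits, since it says that all Gram determinants of `m + 1` vectors in the range vanish, and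
every bounded `X` is the pointwise limit of the compact operators `X P`, `P` running over the
orthogonal projections onto finite-dimensional subspaces. So the bound passes to `[S, X]`. -/

def IsFiniteRank {H : Type*} [NormedAddCommGroup H] [InnerProductSpace ℂ H]
    (T : H →L[ℂ] H) : Prop :=
  FiniteDimensional ℂ (LinearMap.range (T : H →ₗ[ℂ] H))

open Filter Topology Metric Set Matrix

namespace LinearMap

variable {K V V' : Type*} [DivisionRing K] [AddCommGroup V] [Module K V]
  [AddCommGroup V'] [Module K V']

theorem rank_le_iff_forall_not_linearIndependent (f : V →ₗ[K] V') (n : ℕ) :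
    f.rank ≤ n ↔ ∀ x : Fin (n + 1) → V, ¬ LinearIndependent K (f ∘ x) := by
  rw [← not_lt, ← Cardinal.natCast_add_one_le_iff, ← Nat.cast_add_one, rank, Module.le_rank_iff,
    ← not_exists, not_iff_not]
  constructor
  · rintro ⟨v, hv⟩
    obtain ⟨x, rfl⟩ := f.surjective_rangeRestrict.comp_left v
    exact ⟨x, hv.map' _ (Submodule.ker_subtype _)⟩
  · rintro ⟨x, hx⟩
    exact ⟨f.rangeRestrict ∘ x, .of_comp (range f).subtype hx⟩

theorem rank_neg (f : V →ₗ[K] V') : (-f).rank = f.rank := by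
  rw [rank, rank, range_neg]

theorem rank_sub_le (f g : V →ₗ[K] V') : (f - g).rank ≤ f.rank + g.rank := by
  simpa only [sub_eq_add_neg, rank_neg] using rank_add_le f (-g)

end LinearMap

section Gram

variable {𝕜 F : Type*} [RCLike 𝕜] [NormedAddCommGroup F] [InnerProductSpace 𝕜 F]

theorem Matrix.continuous_det_gram (n : Type*) [Fintype n] [DecidableEq n] :
    Continuous fun v : n → F => (gram 𝕜 v).det :=
  continuous_id.matrix_det.comp <| continuous_pi fun i => continuous_pi fun j =>
    (continuous_apply i).inner (continuous_apply j)

theorem LinearMap.rank_le_iff_forall_det_gram_eq_zero {E : Type*} [AddCommGroup E] [Module 𝕜 E]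
    (f : E →ₗ[𝕜] F) (n : ℕ) : f.rank ≤ n ↔ ∀ x : Fin (n + 1) → E, (gram 𝕜 (f ∘ x)).det = 0 := by
  simp only [rank_le_iff_forall_not_linearIndependent, ← det_gram_ne_zero_iff_linearIndependent,
    not_not]

namespace ContinuousLinearMap

variable {E : Type*} [AddCommGroup E] [Module 𝕜 E] [TopologicalSpace E]

theorem rank_le_of_tendsto {ι : Type*} {l : Filter ι} [l.NeBot] {A : ι → E →L[𝕜] F}
    {B : E →L[𝕜] F} {n : ℕ} (hAB : ∀ v, Tendsto (fun i => A i v) l (𝓝 (B v)))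
    (hA : ∀ᶠ i in l, (A i : E →ₗ[𝕜] F).rank ≤ n) : (B : E →ₗ[𝕜] F).rank ≤ n := by
  rw [LinearMap.rank_le_iff_forall_det_gram_eq_zero]
  intro x
  have hdet := ((continuous_det_gram (𝕜 := 𝕜) (Fin (n + 1))).tendsto (B ∘ x)).comp
    (tendsto_pi_nhds.2 fun j => hAB (x j))
  refine tendsto_nhds_unique hdet (tendsto_const_nhds.congr' ?_)
  filter_upwards [hA] with i hi
  exact ((LinearMap.rank_le_iff_forall_det_gram_eq_zero _ n).1 hi x).symm

theorem isClosed_setOf_rank_le [IsTopologicalAddGroup E] [ContinuousSMul 𝕜 E] (n : ℕ) :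
    IsClosed {A : E →L[𝕜] F | (A : E →ₗ[𝕜] F).rank ≤ n} := by
  refine isClosed_of_closure_subset fun B hB => ?_
  have := mem_closure_iff_nhdsWithin_neBot.1 hB
  exact rank_le_of_tendsto (A := id) (l := 𝓝[{A : E →L[𝕜] F | (A : E →ₗ[𝕜] F).rank ≤ n}] B)
    (fun v => ((continuous_eval_const v).tendsto B).mono_left nhdsWithin_le_nhds)
    self_mem_nhdsWithin

end ContinuousLinearMap

theorem ContinuousLinearMap.exists_rank_le_of_forall_finiteDimensional_range {E G : Type*}
    [NormedAddCommGroup E] [NormedSpace 𝕜 E] [CompleteSpace E] [NormedAddCommGroup G]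
    [NormedSpace 𝕜 G] (Φ : E →L[𝕜] G →L[𝕜] F)
    (hΦ : ∀ e, FiniteDimensional 𝕜 (Φ e : G →ₗ[𝕜] F).range) :
    ∃ n : ℕ, ∀ e, (Φ e : G →ₗ[𝕜] F).rank ≤ n := by
  set C : ℕ → Set E := fun n => Φ ⁻¹' {A | (A : G →ₗ[𝕜] F).rank ≤ n}
  have hC : ∀ n, IsClosed (C n) := fun n => (isClosed_setOf_rank_le n).preimage Φ.continuous
  have hcover : ⋃ n, C n = univ := iUnion_eq_univ_iff.2 fun e =>
    ⟨_, (Module.finrank_eq_rank (R := 𝕜) (Φ e : G →ₗ[𝕜] F).range).ge⟩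
  obtain ⟨n, e₀, he₀⟩ := nonempty_interior_of_iUnion_of_closed hC hcover
  obtain ⟨ε, hε, hball⟩ := isOpen_iff.1 isOpen_interior e₀ he₀
  have hsmall : ∀ e ∈ ball (0 : E) ε, (Φ e : G →ₗ[𝕜] F).rank ≤ ↑(n + n) := fun e he => by
    have hmem : e₀ + e ∈ C n := interior_subset <| hball <| by simpa using he
    have hΦe : Φ e = Φ (e₀ + e) - Φ e₀ := by rw [map_add, add_sub_cancel_left]
    rw [hΦe, toLinearMap_sub, Nat.cast_add]
    exact (LinearMap.rank_sub_le _ _).trans (add_le_add hmem (interior_subset (s := C n) he₀))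
  refine ⟨n + n, fun e => ?_⟩
  obtain ⟨r, hr, habs⟩ := (absorbent_ball_zero (𝕜 := 𝕜) hε e).exists_pos
  obtain ⟨y, hy, rfl⟩ := habs r (by simp [abs_of_pos hr]) rfl
  rw [map_smul, toLinearMap_smul]
  exact (Submodule.rank_mono (LinearMap.range_smul_le_range _ _)).trans (hsmall y hy)

end Gram

section Approximation

variable {𝕜 H F : Type*} [RCLike 𝕜] [NormedAddCommGroup H] [InnerProductSpace 𝕜 H]
  [NormedAddCommGroup F] [NormedSpace 𝕜 F]

theorem tendsto_starProjection_span_finset (v : H) :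
    Tendsto (fun s : Finset H => (Submodule.span 𝕜 (s : Set H)).starProjection v) atTop (𝓝 v) := by
  refine Submodule.starProjection_tendsto_self _
    (fun s t hst => Submodule.span_mono (R := 𝕜) (Finset.coe_subset.2 hst)) v ?_
  refine le_trans (fun x _ => ?_) (Submodule.le_topologicalClosure _)
  exact Submodule.mem_iSup_of_mem {x} (Submodule.subset_span (by simp))

theorem ContinuousLinearMap.isCompactOperator_comp_starProjection (X : H →L[𝕜] F)
    (U : Submodule 𝕜 H) [FiniteDimensional 𝕜 U] : IsCompactOperator (X ∘L U.starProjection) :=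
  (isCompactOperator_of_locallyCompactSpace_dom U.orthogonalProjectionOnto).clm_comp
    (X ∘L U.subtypeL)

end Approximation

theorem finite_rank_commutators_extend_to_bounded_operators_general
    (H : Type*) [NormedAddCommGroup H] [InnerProductSpace ℂ H] [CompleteSpace H]
    (S : H →L[ℂ] H)
    (hS : ∀ T : H →L[ℂ] H, IsCompactOperator ⇑T → IsFiniteRank (S * T - T * S)) :
    (∀ X : H →L[ℂ] H, IsFiniteRank (S * X - X * S)) ∧
      ∃ R : ℕ, ∀ X : H →L[ℂ] H,
        LinearMap.rank ((S * X - X * S : H →L[ℂ] H) : H →ₗ[ℂ] H) ≤ (R : Cardinal) := by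
  let K := compactOperator (RingHom.id ℂ) H H
  have : CompleteSpace K := isClosed_setOfPred_isCompactOperator.completeSpace_coe
  let Φ : K →L[ℂ] H →L[ℂ] H :=
    (ContinuousLinearMap.mul ℂ _ S - (ContinuousLinearMap.mul ℂ _).flip S) ∘L K.subtypeL
  obtain ⟨n, hn⟩ := Φ.exists_rank_le_of_forall_finiteDimensional_range fun T => hS T T.2
  have hbound (X : H →L[ℂ] H) : ((S * X - X * S : H →L[ℂ] H) : H →ₗ[ℂ] H).rank ≤ n := by
    let T (s : Finset H) : H →L[ℂ] H := X * (Submodule.span ℂ (s : Set H)).starProjection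
    have hT (v : H) : Tendsto (fun s => T s v) atTop (𝓝 (X v)) :=
      (X.continuous.tendsto v).comp (tendsto_starProjection_span_finset v)
    exact ContinuousLinearMap.rank_le_of_tendsto (A := fun s => S * T s - T s * S)
      (fun v => ((S.continuous.tendsto _).comp (hT v)).sub (hT (S v)))
      (Eventually.of_forall fun s => hn ⟨T s, X.isCompactOperator_comp_starProjection _⟩)
  exact ⟨fun X => Module.rank_lt_aleph0_iff.1 ((hbound X).trans_lt Cardinal.natCast_lt_aleph0),
    n, hbound⟩

/-- If `S ∈ B(H)` has finite-rank commutator with every compact operator, then `[S, X]` is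
finite-rank for every bounded operator `X`, with all the ranks bounded by a single uniform
integer `R`. -/
theorem finite_rank_commutators_extend_to_bounded_operators
    (H : Type*) [NormedAddCommGroup H] [InnerProductSpace ℂ H] [CompleteSpace H]
    [TopologicalSpace.SeparableSpace H] (hinf : ¬ FiniteDimensional ℂ H)
    (S : H →L[ℂ] H)
    (hS : ∀ T : H →L[ℂ] H, IsCompactOperator ⇑T → IsFiniteRank (S * T - T * S)) :
    (∀ X : H →L[ℂ] H, IsFiniteRank (S * X - X * S)) ∧
      ∃ R : ℕ, ∀ X : H →L[ℂ] H,
        LinearMap.rank ((S * X - X * S : H →L[ℂ] H) : H →ₗ[ℂ] H) ≤ (R : Cardinal) :=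
  finite_rank_commutators_extend_to_bounded_operators_general H S hS
end

section
/- Let H be a separable infinite-dimensional complex Hilbert space and let S ∈ B(H) be a bounded operator with S ∉ ℂ·I_H + K(H). Then the map D : K(H) → K(H) defined by D(T) = ST − TS is a well-defined bounded derivation on K(H) (its values are compact), and D is not inner: there is no x ∈ K(H) with D(T) = Tx − xT for all T ∈ K(H). -/
/-!
If `D = [S, ·]` were inner on `K(H)`, say `D T = T x - x T` with `x` compact, then `S + x` would
commute with every compact operator, in particular with every rank-one operator `v ↦ f v • y`.
Evaluating that commutation at a vector `v` with `f v = 1` gives `(S + x) y = f ((S + x) v) • y`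
for all `y`, so `S + x` is a scalar `c`, and `S = c • 1 - x` contradicts the hypothesis on `S`.
-/

lemma commute_add_of_mul_sub_mul_eq {R : Type*} [Ring R] {a b x : R}
    (h : a * b - b * a = b * x - x * b) : Commute (a + x) b := by
  rw [Commute, SemiconjBy, ← sub_eq_zero, ← sub_eq_zero.mpr h]
  noncomm_ring

lemma norm_mul_sub_mul_le {R : Type*} [NonUnitalSeminormedRing R] (a b : R) :
    ‖a * b - b * a‖ ≤ 2 * ‖a‖ * ‖b‖ :=
  calc ‖a * b - b * a‖ ≤ ‖a * b‖ + ‖b * a‖ := norm_sub_le _ _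
    _ ≤ ‖a‖ * ‖b‖ + ‖b‖ * ‖a‖ := add_le_add (norm_mul_le _ _) (norm_mul_le _ _)
    _ = 2 * ‖a‖ * ‖b‖ := by ring

section

variable {𝕜 E : Type*} [NontriviallyNormedField 𝕜] [NormedAddCommGroup E] [NormedSpace 𝕜 E]

lemma IsCompactOperator.mul_sub_mul (S : E →L[𝕜] E) {T : E →L[𝕜] E}
    (hT : IsCompactOperator T) : IsCompactOperator ⇑(S * T - T * S) :=
  (hT.clm_comp S).sub (hT.comp_clm S)

lemma isCompactOperator_smulRight [LocallyCompactSpace 𝕜] (f : StrongDual 𝕜 E) (y : E) :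
    IsCompactOperator (f.smulRight y) :=
  (isCompactOperator_of_locallyCompactSpace_rng
    (ContinuousLinearMap.toSpanSingleton 𝕜 y)).comp_clm f

lemma exists_eq_smul_one_of_forall_commute_smulRight [SeparatingDual 𝕜 E] (A : E →L[𝕜] E)
    (hA : ∀ (f : StrongDual 𝕜 E) (y : E), Commute A (f.smulRight y)) :
    ∃ c : 𝕜, A = c • 1 := by
  nontriviality E
  obtain ⟨v, hv⟩ := exists_ne (0 : E)
  obtain ⟨f, hfv⟩ := SeparatingDual.exists_eq_one (R := 𝕜) hv
  refine ⟨f (A v), ContinuousLinearMap.ext fun y => ?_⟩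
  simpa [hfv] using congr($(hA f y) v)

lemma exists_eq_smul_one_of_forall_commute_isCompactOperator [LocallyCompactSpace 𝕜]
    [SeparatingDual 𝕜 E] (A : E →L[𝕜] E)
    (hA : ∀ T : E →L[𝕜] E, IsCompactOperator T → Commute A T) :
    ∃ c : 𝕜, A = c • 1 :=
  exists_eq_smul_one_of_forall_commute_smulRight A fun f y =>
    hA _ (isCompactOperator_smulRight f y)

end

theorem ad_of_noncompact_perturbation_is_outer_derivation_general
    (H : Type*) [NormedAddCommGroup H] [InnerProductSpace ℂ H]
    (S : H →L[ℂ] H)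
    (hS : ∀ (c : ℂ) (K : H →L[ℂ] H), IsCompactOperator ⇑K →
      S ≠ c • (1 : H →L[ℂ] H) + K) :
    (∀ T : H →L[ℂ] H, IsCompactOperator ⇑T → IsCompactOperator ⇑(S * T - T * S)) ∧
      (∀ S' T : H →L[ℂ] H, IsCompactOperator ⇑S' → IsCompactOperator ⇑T →
        S * (S' + T) - (S' + T) * S = (S * S' - S' * S) + (S * T - T * S)) ∧
      (∀ (c : ℂ) (T : H →L[ℂ] H), IsCompactOperator ⇑T →
        S * (c • T) - (c • T) * S = c • (S * T - T * S)) ∧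
      (∃ C : ℝ, ∀ T : H →L[ℂ] H, IsCompactOperator ⇑T → ‖S * T - T * S‖ ≤ C * ‖T‖) ∧
      (∀ S' T : H →L[ℂ] H, IsCompactOperator ⇑S' → IsCompactOperator ⇑T →
        S * (S' * T) - (S' * T) * S = S' * (S * T - T * S) + (S * S' - S' * S) * T) ∧
      ¬ ∃ x : H →L[ℂ] H, IsCompactOperator ⇑x ∧
        ∀ T : H →L[ℂ] H, IsCompactOperator ⇑T → S * T - T * S = T * x - x * T := by
  refine ⟨fun T hT => hT.mul_sub_mul S, fun _ _ _ _ => by noncomm_ring,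
    fun c T _ => by rw [mul_smul_comm, smul_mul_assoc, smul_sub],
    ⟨2 * ‖S‖, fun T _ => norm_mul_sub_mul_le S T⟩, fun _ _ _ _ => by noncomm_ring, ?_⟩
  rintro ⟨x, hx, hinner⟩
  obtain ⟨c, hc⟩ := exists_eq_smul_one_of_forall_commute_isCompactOperator (S + x)
    fun T hT => commute_add_of_mul_sub_mul_eq (hinner T hT)
  exact hS c (-x) hx.neg (by rw [← hc]; abel)

/-- If `S ∈ B(H)` is not of the form scalar-plus-compact, then `D(T) = S*T - T*S` is a
well-defined bounded derivation of `K(H)` (compact-valued, linear, bounded, Leibniz) which is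
not inner: no compact `x` satisfies `D T = T * x - x * T` for all compact `T`. -/
theorem ad_of_noncompact_perturbation_is_outer_derivation
    (H : Type*) [NormedAddCommGroup H] [InnerProductSpace ℂ H] [CompleteSpace H]
    [TopologicalSpace.SeparableSpace H] (hinf : ¬ FiniteDimensional ℂ H)
    (S : H →L[ℂ] H)
    (hS : ∀ (c : ℂ) (K : H →L[ℂ] H), IsCompactOperator ⇑K →
      S ≠ c • (1 : H →L[ℂ] H) + K) :
    (∀ T : H →L[ℂ] H, IsCompactOperator ⇑T → IsCompactOperator ⇑(S * T - T * S)) ∧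
      (∀ S' T : H →L[ℂ] H, IsCompactOperator ⇑S' → IsCompactOperator ⇑T →
        S * (S' + T) - (S' + T) * S = (S * S' - S' * S) + (S * T - T * S)) ∧
      (∀ (c : ℂ) (T : H →L[ℂ] H), IsCompactOperator ⇑T →
        S * (c • T) - (c • T) * S = c • (S * T - T * S)) ∧
      (∃ C : ℝ, ∀ T : H →L[ℂ] H, IsCompactOperator ⇑T → ‖S * T - T * S‖ ≤ C * ‖T‖) ∧
      (∀ S' T : H →L[ℂ] H, IsCompactOperator ⇑S' → IsCompactOperator ⇑T →
        S * (S' * T) - (S' * T) * S = S' * (S * T - T * S) + (S * S' - S' * S) * T) ∧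
      ¬ ∃ x : H →L[ℂ] H, IsCompactOperator ⇑x ∧
        ∀ T : H →L[ℂ] H, IsCompactOperator ⇑T → S * T - T * S = T * x - x * T :=
  ad_of_noncompact_perturbation_is_outer_derivation_general H S hS
end
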